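/- arXiv:2409.01492 — 5 statements merged into one kernel-verified Lean document; each statement's English description precedes it below -/
import Mathlib

section
/- Let x and y be distinct odd primes such that x is not a quadratic residue modulo y. Then for every Dirichlet character χ modulo y with χ(x) = 1, we have χ(-1) = 1 (i.e., χ is even). -/
theorem stmt_0 (x y : ℕ) (hx : x.Prime) (hy : y.Prime) [Fact y.Prime]
    (hxodd : Odd x) (hyodd : Odd y) (hxy : x ≠ y)
    (hleg : legendreSym y x = -1)
    (χ : DirichletCharacter ℂ y) (hχx : χ (x : ZMod y) = 1) :
    χ (-1) = 1 := by
  have h := legendreSym.eq_pow y x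
  rw [hleg] at h
  push_cast at h
  calc χ (-1) = χ ((x : ZMod y) ^ (y / 2)) := by rw [← h]
    _ = (χ (x : ZMod y)) ^ (y / 2) := map_pow χ _ _
    _ = 1 := by rw [hχx, one_pow]
end

section
/- Let χ₀ be a Dirichlet character modulo z and let y be a prime dividing z. Define χ modulo yz by χ(k) = χ₀(k) (well-defined since y divides z). If ∑_{0<k<z} χ₀(k) = 0 and ∑_{0<k<z/2} χ₀(k) ≠ 0, then ∑_{0<k<yz/2} χ(k) ≠ 0. -/
theorem stmt_3 (z y : ℕ) (hz : Odd z) (hzpos : 0 < z) (hy : y.Prime) (hyodd : Odd y)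
    (hdvd : y ∣ z) (χ₀ : DirichletCharacter ℂ z)
    (χ : DirichletCharacter ℂ (y * z))
    (hχ : χ = DirichletCharacter.changeLevel (Dvd.dvd.mul_left dvd_rfl y) χ₀)
    (hfull : ∑ k ∈ Finset.Ico 1 z, χ₀ (k : ZMod z) = 0)
    (hhalf : ∑ k ∈ Finset.Ico 1 ((z + 1) / 2), χ₀ (k : ZMod z) ≠ 0) :
    ∑ k ∈ Finset.Ico 1 ((y * z + 1) / 2), χ (k : ZMod (y * z)) ≠ 0 := by
  have hy3 : 3 ≤ y := by
    have h2 := hy.two_le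
    have := Nat.odd_iff.mp hyodd
    omega
  have hz1 : 1 < z := lt_of_lt_of_le (by omega) (Nat.le_of_dvd hzpos hdvd)
  haveI : Fact (1 < z) := ⟨hz1⟩
  haveI : NeZero (y * z) := ⟨by positivity⟩
  set g : ℕ → ℂ := fun k => χ₀ (k : ZMod z) with hg
  -- χ agrees with g on naturals
  have hkey : ∀ k : ℕ, χ ((k : ZMod (y * z))) = g k := by
    intro k
    by_cases hu : IsUnit ((k : ZMod (y * z)))
    · lift ((k : ZMod (y * z))) to (ZMod (y * z))ˣ using hu with u hu'
      rw [hχ, DirichletCharacter.changeLevel_eq_cast_of_dvd]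
      have : (ZMod.cast ((u : ZMod (y * z))) : ZMod z) = (k : ZMod z) := by
        rw [hu']
        have h2 := map_natCast (ZMod.castHom (show z ∣ y * z from Dvd.dvd.mul_left dvd_rfl y) (ZMod z)) k
        rwa [ZMod.castHom_apply] at h2
      rw [this]
    · have hu2 : ¬ IsUnit ((k : ZMod z)) := by
        rw [ZMod.isUnit_iff_coprime] at hu ⊢
        intro hc
        exact hu (Nat.Coprime.mul_right (Nat.Coprime.coprime_dvd_right hdvd hc) hc)
      rw [MulChar.map_nonunit χ hu, hg]
      exact (MulChar.map_nonunit χ₀ hu2).symm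
  have hg0 : g 0 = 0 := by
    have : ¬ IsUnit ((0 : ℕ) : ZMod z) := by
      rw [Nat.cast_zero]
      exact not_isUnit_zero
    exact MulChar.map_nonunit χ₀ this
  have hshift : ∀ a i : ℕ, g (a * z + i) = g i := by
    intro a i
    simp [hg, Nat.cast_add, Nat.cast_mul, ZMod.natCast_self]
  have hrange : ∑ k ∈ Finset.range z, g k = 0 := by
    rw [Finset.range_eq_Ico, Finset.sum_eq_sum_Ico_succ_bot hzpos]
    simpa [hg0] using hfull
  have hblock : ∀ a : ℕ, ∑ k ∈ Finset.Ico (a * z) (a * z + z), g k = 0 := by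
    intro a
    rw [Finset.sum_Ico_eq_sum_range]
    simp only [Nat.add_sub_cancel_left, hshift]
    exact hrange
  have hblocks : ∀ n : ℕ, ∑ k ∈ Finset.range (n * z), g k = 0 := by
    intro n
    induction n with
    | zero => simp
    | succ n ih =>
      rw [Finset.range_eq_Ico, Nat.succ_mul,
        ← Finset.sum_Ico_consecutive _ (Nat.zero_le (n * z)) (Nat.le_add_right _ _)]
      rw [Finset.range_eq_Ico] at ih
      rw [ih, hblock, add_zero]
  -- decompose the bound
  obtain ⟨m, hm⟩ := hyodd
  obtain ⟨t, ht⟩ := hz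
  have hbound : (y * z + 1) / 2 = m * z + (z + 1) / 2 := by
    subst hm ht
    have h1 : (2 * m + 1) * (2 * t + 1) + 1 = 2 * (m * (2 * t + 1) + (t + 1)) := by ring
    rw [h1, Nat.mul_div_cancel_left _ (by norm_num)]
    omega
  -- main computation
  have hmain : ∑ k ∈ Finset.Ico 1 ((y * z + 1) / 2), χ (k : ZMod (y * z))
      = ∑ k ∈ Finset.Ico 1 ((z + 1) / 2), χ₀ (k : ZMod z) := by
    have hNpos : 0 < (y * z + 1) / 2 := by
      have : 0 < y * z := by positivity
      omega
    have e1 : ∑ k ∈ Finset.Ico 1 ((y * z + 1) / 2), χ (k : ZMod (y * z))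
        = ∑ k ∈ Finset.range ((y * z + 1) / 2), g k := by
      have e2 : ∑ k ∈ Finset.range ((y * z + 1) / 2), g k
          = ∑ k ∈ Finset.Ico 1 ((y * z + 1) / 2), g k := by
        rw [Finset.range_eq_Ico, Finset.sum_eq_sum_Ico_succ_bot hNpos, hg0, zero_add]
      rw [e2]
      exact Finset.sum_congr rfl fun k _ => hkey k
    rw [e1, hbound, Finset.range_eq_Ico,
      ← Finset.sum_Ico_consecutive _ (Nat.zero_le (m * z)) (Nat.le_add_right _ _),
      ← Finset.range_eq_Ico, hblocks, zero_add, Finset.sum_Ico_eq_sum_range]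
    simp only [Nat.add_sub_cancel_left, hshift]
    rw [show ∑ k ∈ Finset.range ((z + 1) / 2), g k
        = ∑ k ∈ Finset.Ico 1 ((z + 1) / 2), g k from by
      rw [Finset.range_eq_Ico, Finset.sum_eq_sum_Ico_succ_bot (by omega : 0 < (z + 1) / 2),
        hg0, zero_add]]
  rw [hmain]
  exact hhalf
end

section
/- Let q and r be distinct odd primes, and let χ₀(k) = (k|r) be the Legendre symbol character modulo r. Define χ modulo qr by χ(k) = χ₀(k) if q ∤ k and χ(k) = 0 if q | k. If χ₀(q) = -1, then ∑_{0<k<qr/2} χ(k) = 2·∑_{0<k<r/2} χ₀(k). -/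
lemma leg_period (r : ℕ) [Fact r.Prime] (b k : ℕ) :
    legendreSym r ((b * r + k : ℕ) : ℤ) = legendreSym r (k : ℤ) := by
  rw [legendreSym.mod, legendreSym.mod r (k : ℤ)]
  congr 1
  push_cast
  rw [add_comm, Int.add_mul_emod_self_right]

lemma leg_base_sum (r : ℕ) [Fact r.Prime] (hr2 : r ≠ 2) :
    ∑ k ∈ Finset.range r, legendreSym r (k : ℤ) = 0 := by
  have h : ∑ k ∈ Finset.range r, legendreSym r (k : ℤ)
      = ∑ x : ZMod r, quadraticChar (ZMod r) x := by
    refine Finset.sum_nbij' (fun k => (k : ZMod r)) (fun x => x.val) ?_ ?_ ?_ ?_ ?_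
    · intro a _; exact Finset.mem_univ _
    · intro x _; exact Finset.mem_range.mpr (ZMod.val_lt x)
    · intro a ha; exact ZMod.val_cast_of_lt (Finset.mem_range.mp ha)
    · intro x _; simp [ZMod.natCast_val, ZMod.cast_id]
    · intro a _
      simp [legendreSym]
  rw [h]
  exact quadraticChar_sum_zero (by rwa [ZMod.ringChar_zmod_n])

lemma leg_mul_period_sum (r : ℕ) [Fact r.Prime] (hr2 : r ≠ 2) (n : ℕ) :
    ∑ k ∈ Finset.range (n * r), legendreSym r (k : ℤ) = 0 := by
  induction n with
  | zero => simp
  | succ n ih =>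
    have hd : (n + 1) * r = n * r + r := by ring
    rw [hd, Finset.sum_range_add, ih, zero_add]
    have : ∀ k ∈ Finset.range r, legendreSym r ((n * r + k : ℕ) : ℤ) = legendreSym r (k : ℤ) :=
      fun k _ => leg_period r n k
    rw [Finset.sum_congr rfl this, leg_base_sum r hr2]

lemma leg_Ico_eq_range (r : ℕ) [Fact r.Prime] (n : ℕ) (hn : 1 ≤ n) :
    ∑ k ∈ Finset.Ico 1 n, legendreSym r (k : ℤ) =
      ∑ k ∈ Finset.range n, legendreSym r (k : ℤ) := by
  rw [Finset.range_eq_Ico, Finset.sum_eq_sum_Ico_succ_bot hn]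
  simp [legendreSym.at_zero]

theorem stmt_4 (q r : ℕ) (hq : q.Prime) (hr : r.Prime) [Fact r.Prime]
    (hqodd : Odd q) (hrodd : Odd r) (hqr : q ≠ r)
    (hlegq : legendreSym r (q : ℤ) = -1) :
    ∑ k ∈ Finset.Ico 1 ((q * r + 1) / 2),
        (if q ∣ k then 0 else legendreSym r (k : ℤ)) =
      2 * ∑ k ∈ Finset.Ico 1 ((r + 1) / 2), legendreSym r (k : ℤ) := by
  obtain ⟨N, hN⟩ := hqodd
  obtain ⟨M, hM⟩ := hrodd
  have hq3 : 3 ≤ q := by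
    rcases hq.two_le.lt_or_eq with h | h
    · omega
    · exfalso; omega
  have hr2 : r ≠ 2 := by omega
  have hbound : (q * r + 1) / 2 = N * r + M + 1 := by subst hN hM; ring_nf; omega
  have hbound2 : (r + 1) / 2 = M + 1 := by omega
  rw [hbound, hbound2]
  set T : ℕ := N * r + M with hT
  have hqM : q * (M + 1) > T := by
    have h1 : q * (M + 1) = 2 * (N * M) + 2 * N + M + 1 := by subst hN; ring
    have hT' : T = 2 * (N * M) + N + M := by rw [hT, hM]; ring
    omega
  have hqMle : q * M ≤ T := by
    have h1 : q * M = 2 * (N * M) + M := by subst hN; ring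
    have hT' : T = 2 * (N * M) + N + M := by rw [hT, hM]; ring
    omega
  have stepA : ∑ k ∈ Finset.Ico 1 (T + 1),
        (if q ∣ k then 0 else legendreSym r (k : ℤ))
      = (∑ k ∈ Finset.Ico 1 (T + 1), legendreSym r (k : ℤ))
        - ∑ k ∈ Finset.Ico 1 (T + 1), (if q ∣ k then legendreSym r (k : ℤ) else 0) := by
    rw [← Finset.sum_sub_distrib]
    apply Finset.sum_congr rfl
    intro k _
    split_ifs <;> ring
  have stepB : ∑ k ∈ Finset.Ico 1 (T + 1),
        (if q ∣ k then legendreSym r (k : ℤ) else 0)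
      = ∑ j ∈ Finset.Ico 1 (M + 1), legendreSym r ((q * j : ℕ) : ℤ) := by
    rw [← Finset.sum_filter]
    refine Finset.sum_nbij' (fun k => k / q) (fun j => q * j) ?_ ?_ ?_ ?_ ?_
    · intro a ha
      simp only [Finset.mem_filter, Finset.mem_Ico] at ha
      obtain ⟨⟨h1, h2⟩, c, rfl⟩ := ha
      simp only [Finset.mem_Ico]
      rw [Nat.mul_div_cancel_left _ (by omega : 0 < q)]
      have hc1 : 1 ≤ c := by
        rcases Nat.eq_zero_or_pos c with h | h
        · subst h; omega
        · exact h
      have hc2 : c < M + 1 := by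
        by_contra h
        push_neg at h
        have : q * (M + 1) ≤ q * c := Nat.mul_le_mul_left q h
        omega
      exact ⟨hc1, hc2⟩
    · intro j hj
      simp only [Finset.mem_Ico] at hj
      simp only [Finset.mem_filter, Finset.mem_Ico]
      refine ⟨⟨?_, ?_⟩, ⟨j, rfl⟩⟩
      · have := Nat.mul_pos (by omega : 0 < q) (by omega : 0 < j)
        omega
      · have h1 : q * j ≤ q * M := Nat.mul_le_mul_left q (by omega)
        omega
    · intro a ha
      simp only [Finset.mem_filter] at ha
      exact Nat.mul_div_cancel' ha.2
    · intro j _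
      exact Nat.mul_div_cancel_left _ (by omega : 0 < q)
    · intro a ha
      simp only [Finset.mem_filter] at ha
      rw [Nat.mul_div_cancel' ha.2]
  have stepC : ∀ j : ℕ, legendreSym r ((q * j : ℕ) : ℤ) = - legendreSym r (j : ℤ) := by
    intro j
    push_cast
    rw [legendreSym.mul, hlegq]
    ring
  have stepD : ∑ k ∈ Finset.Ico 1 (T + 1), legendreSym r (k : ℤ)
      = ∑ k ∈ Finset.Ico 1 (M + 1), legendreSym r (k : ℤ) := by
    rw [leg_Ico_eq_range r _ (by omega), leg_Ico_eq_range r _ (by omega)]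
    have hsplit : T + 1 = N * r + (M + 1) := by omega
    rw [hsplit, Finset.sum_range_add, leg_mul_period_sum r hr2 N, zero_add]
    exact Finset.sum_congr rfl fun k _ => leg_period r N k
  rw [stepA, stepB, stepD, Finset.sum_congr rfl fun j _ => stepC j,
    Finset.sum_neg_distrib]
  ring
end

section
/- Let S be a commutative ring, a, g ∈ S, and a_i, a_j ∈ S distinct elements. Suppose there exists s ∈ S with s·(a_i - a_j)·g = g², and that 2 is invertible in S. If I_i = (1 + a_i g) and I_j = (1 + a_j g), then I_i + I_j = S. -/
theorem stmt_8 (S : Type*) [CommRing S] (a g s ai aj : S) (hij : ai ≠ aj)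
    (hs : s * (ai - aj) * g = g ^ 2) (h2 : IsUnit (2 : S)) :
    Ideal.span {1 + ai * g} + Ideal.span {1 + aj * g} = ⊤ := by
  rw [Ideal.eq_top_iff_one]
  have key : (2 - (1 + ai * g) + ai ^ 2 * s) * (1 + ai * g)
      + (-(ai ^ 2 * s)) * (1 + aj * g) = 1 := by
    linear_combination ai ^ 2 * hs
  have mem : (2 - (1 + ai * g) + ai ^ 2 * s) * (1 + ai * g)
      + (-(ai ^ 2 * s)) * (1 + aj * g)
      ∈ Ideal.span {1 + ai * g} + Ideal.span {1 + aj * g} :=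
    add_mem
      (Ideal.mem_sup_left (Ideal.mul_mem_left _ _ (Ideal.mem_span_singleton_self _)))
      (Ideal.mem_sup_right (Ideal.mul_mem_left _ _ (Ideal.mem_span_singleton_self _)))
  rwa [key] at mem
end

section
/- Let p be an odd prime and r a prime with r ≡ 3 (mod 4) and (p|r) = 1. Then the set of primes q with (p|q) = -1 and (q|r) = -1 is infinite. -/
/-!
Take a nonsquare `x` modulo `p` and a nonsquare `y` modulo `r`. By the Chinese remainder
theorem the conditions `q ≡ 1 (mod 4)`, `q ≡ x (mod p)`, `q ≡ y (mod r)` define a unit residue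
class modulo `4pr`, which contains infinitely many primes by Dirichlet's theorem. For such a
prime `q`, quadratic reciprocity with `q ≡ 1 (mod 4)` gives `(p|q) = (q|p) = (x|p) = -1`,
and `(q|r) = (y|r) = -1` holds by construction.
-/

namespace ZMod

theorem exists_isUnit_natCast_eq_iff {m n : ℕ} (h : m.Coprime n) {x : ZMod m} {y : ZMod n}
    (hx : IsUnit x) (hy : IsUnit y) :
    ∃ z : ZMod (m * n), IsUnit z ∧
      ∀ k : ℕ, (k : ZMod (m * n)) = z ↔ (k : ZMod m) = x ∧ (k : ZMod n) = y := by
  let e := chineseRemainder h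
  refine ⟨e.symm (x, y), (Prod.isUnit_iff.mpr ⟨hx, hy⟩).map e.symm, fun k => ?_⟩
  rw [← e.injective.eq_iff, e.apply_symm_apply, map_natCast, Prod.ext_iff,
    Prod.fst_natCast, Prod.snd_natCast]

theorem exists_isUnit_not_isSquare {p : ℕ} [Fact p.Prime] (hp : p ≠ 2) :
    ∃ x : ZMod p, IsUnit x ∧ ¬IsSquare x := by
  obtain ⟨x, hx⟩ := FiniteField.exists_nonsquare (F := ZMod p) (by rwa [ringChar_zmod_n])
  exact ⟨x, Ne.isUnit (by rintro rfl; exact hx .zero), hx⟩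

end ZMod

theorem Nat.infinite_setOf_prime_mod_four_eq_one_and_not_isSquare {p r : ℕ}
    [hp : Fact p.Prime] [hr : Fact r.Prime] (hp2 : p ≠ 2) (hr2 : r ≠ 2) (hpr : p ≠ r) :
    {q : ℕ | q.Prime ∧ q % 4 = 1 ∧ ¬IsSquare (q : ZMod p) ∧ ¬IsSquare (q : ZMod r)}.Infinite := by
  obtain ⟨x, hx, hx_nonsq⟩ := ZMod.exists_isUnit_not_isSquare hp2
  obtain ⟨y, hy, hy_nonsq⟩ := ZMod.exists_isUnit_not_isSquare hr2
  obtain ⟨z, hz, hz_iff⟩ :=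
    ZMod.exists_isUnit_natCast_eq_iff ((Nat.coprime_primes hp.out hr.out).mpr hpr) hx hy
  have h4 : Nat.Coprime (2 ^ 2) (p * r) := .pow_left 2 <| Nat.coprime_two_left.mpr <|
    (hp.out.odd_of_ne_two hp2).mul (hr.out.odd_of_ne_two hr2)
  obtain ⟨w, hw, hw_iff⟩ := ZMod.exists_isUnit_natCast_eq_iff h4 isUnit_one hz
  have : NeZero (2 ^ 2 * (p * r)) := ⟨by simp [hp.out.ne_zero, hr.out.ne_zero]⟩
  refine (Nat.infinite_setOfPred_prime_and_eq_mod hw).mono ?_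
  rintro q ⟨hq, hqw⟩
  obtain ⟨hq4, hqz⟩ := (hw_iff q).mp hqw
  obtain ⟨hqx, hqy⟩ := (hz_iff q).mp hqz
  refine ⟨hq, ?_, hqx ▸ hx_nonsq, hqy ▸ hy_nonsq⟩
  simpa using (ZMod.natCast_eq_natCast_iff' q 1 4).mp (by simpa using hq4)

theorem stmt_17_general (p r : ℕ) (hp : p.Prime) (hpodd : Odd p)
    (hr : r.Prime) (hr4 : r % 4 = 3) (hpr : p ≠ r) :
    {q : ℕ | q.Prime ∧ q ≠ p ∧ ¬ IsSquare (p : ZMod q) ∧ ¬ IsSquare (q : ZMod r)}.Infinite := by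
  have := Fact.mk hp
  have := Fact.mk hr
  have hp2 : p ≠ 2 := by rintro rfl; norm_num at hpodd
  refine (Nat.infinite_setOf_prime_mod_four_eq_one_and_not_isSquare hp2 (by omega) hpr).mono ?_
  rintro q ⟨hq, hq4, hqp, hqr⟩
  have := Fact.mk hq
  refine ⟨hq, ?_, ?_, hqr⟩
  · rintro rfl
    exact hqp (by simp)
  · rwa [ZMod.exists_sq_eq_prime_iff_of_mod_four_eq_one hq4 hp2]

theorem stmt_17 (p r : ℕ) (hp : p.Prime) (hpodd : Odd p)
    (hr : r.Prime) (hr4 : r % 4 = 3) (hpr : p ≠ r)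
    (hleg : IsSquare (p : ZMod r)) :
    {q : ℕ | q.Prime ∧ q ≠ p ∧ ¬ IsSquare (p : ZMod q) ∧ ¬ IsSquare (q : ZMod r)}.Infinite :=
  stmt_17_general p r hp hpodd hr hr4 hpr
end
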